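/- Let X be a nested almost convex set with n = |X| ≥ 2 points. Then n is even and the set of extreme points of the convex hull of X has exactly (n+2)/2 elements; in particular X contains more than n/2 points in convex position. -/

import Mathlib

open Set

noncomputable section

/-- Points of the plane. -/
abbrev Pt : Type := ℝ × ℝ

/-- The orientation determinant of the triple `(a, b, c)`:
`c` lies strictly to the left of the directed line from `a` to `b` iff `orient a b c > 0`. -/
def orient (a b c : Pt) : ℝ :=
  (b.1 - a.1) * (c.2 - a.2) - (b.2 - a.2) * (c.1 - a.1)

/-- A set of points is in general position if no three pairwise distinct points are collinear. -/
def GenPos (X : Set Pt) : Prop :=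
  ∀ a ∈ X, ∀ b ∈ X, ∀ c ∈ X, a ≠ b → a ≠ c → b ≠ c → orient a b c ≠ 0

/-- The set of extreme points of the convex hull of `S`. -/
def extremePts (S : Set Pt) : Set Pt := Set.extremePoints ℝ (convexHull ℝ S)

/-- Remove the extreme points of the convex hull (one peeling step of convex layers). -/
def peel (S : Set Pt) : Set Pt := S \ extremePts S

/-- `X` has exactly `k` convex layers. -/
def HasLayers (X : Set Pt) (k : ℕ) : Prop :=
  peel^[k] X = ∅ ∧ ∀ j < k, peel^[j] X ≠ ∅

/-- `X_j`, the union of the `j` innermost convex layers (when `X` has `k` layers). -/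
def layerSub (X : Set Pt) (k j : ℕ) : Set Pt := peel^[k - j] X

/-- `R_j`, the `j`-th convex layer of `X` (when `X` has `k` layers), `R_1` innermost. -/
def layer (X : Set Pt) (k j : ℕ) : Set Pt := extremePts (layerSub X k j)

/-- `X` is a nested almost convex set. -/
def IsNACS (X : Set Pt) : Prop :=
  X.Finite ∧ X.Nonempty ∧ GenPos X ∧
  ∀ k, HasLayers X k →
    ∀ j, 1 ≤ j → j ≤ k →
      ∀ a ∈ layer X k j, ∀ b ∈ layer X k j, ∀ c ∈ layer X k j,
        a ≠ b → a ≠ c → b ≠ c →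
        ∃! p : Pt, p ∈ layerSub X k (j - 1) ∩ interior (convexHull ℝ ({a, b, c} : Set Pt))

/-- `q` is a counterclockwise enumeration of `S`. -/
def CCWEnum {m : ℕ} (S : Set Pt) (q : Fin m → Pt) : Prop :=
  Function.Injective q ∧ Set.range q = S ∧
  ∀ a b c : Fin m, a < b → b < c → 0 < orient (q a) (q b) (q c)

/-- The ordered pair `(q1, q2)` of points of `R` is adoptable from `p`. -/
def AdoptablePair (R : Set Pt) (p q1 q2 : Pt) : Prop :=
  ∀ q3 ∈ R \ ({q1, q2} : Set Pt), p ∈ interior (convexHull ℝ ({q1, q2, q3} : Set Pt))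

/-- The `i`-th binary string of length `j` in lexicographic order (`false` before `true`). -/
def strOfNat (j i : ℕ) : List Bool :=
  (List.range j).map fun t => i.testBit (j - 1 - t)

/-- The numeric (lexicographic) rank of a binary string among strings of its length. -/
def natOfStr (s : List Bool) : ℕ := s.foldl (fun n b => 2 * n + b.toNat) 0

/-- The leftmost `k`-level descendant of the node `s`. -/
def firstStr (k : ℕ) (s : List Bool) : List Bool := s ++ List.replicate (k - s.length) false

/-- The rightmost `k`-level descendant of the node `s`. -/
def lastStr (k : ℕ) (s : List Bool) : List Bool := s ++ List.replicate (k - s.length) true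

/-- Non-root nodes of the tree `T₁(k)`: binary strings of length `1..k`. -/
def ValidNode1 (k : ℕ) (s : List Bool) : Prop := 1 ≤ s.length ∧ s.length ≤ k

/-- A type-1 labeling of `X`, given by its label function `x` (the inverse of `ψ`). -/
def IsLabeling1 (k : ℕ) (X : Set Pt) (x : List Bool → Pt) : Prop :=
  Set.InjOn x {s | ValidNode1 k s} ∧ x '' {s | ValidNode1 k s} = X

/-- A type-1 labeling is nested. -/
def Nested1 (k : ℕ) (X : Set Pt) (x : List Bool → Pt) : Prop :=
  ∀ j, 1 ≤ j → j ≤ k →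
    CCWEnum (layer X k j) fun i : Fin (2 ^ j) => x (strOfNat j i.val)

/-- A type-1 labeling is adoptable. -/
def Adoptable1 (k : ℕ) (X : Set Pt) (x : List Bool → Pt) : Prop :=
  ∀ s : List Bool, 1 ≤ s.length → s.length + 1 ≤ k →
    AdoptablePair (layer X k (s.length + 1)) (x s) (x (s ++ [false])) (x (s ++ [true]))

/-- `previous[R_k(u)]` for a type-1 labeling: the cyclic predecessor (in the left-to-right,
i.e. counterclockwise, order of the `k`-level) of `first[R_k(u)]`. -/
def prev1 (k : ℕ) (x : List Bool → Pt) (s : List Bool) : Pt :=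
  x (strOfNat k ((natOfStr (firstStr k s) + (2 ^ k - 1)) % 2 ^ k))

/-- `next[R_k(u)]` for a type-1 labeling: the cyclic successor of `last[R_k(u)]`. -/
def next1 (k : ℕ) (x : List Bool → Pt) (s : List Bool) : Pt :=
  x (strOfNat k ((natOfStr (lastStr k s) + 1) % 2 ^ k))

/-- A type-1 labeling is well laid. -/
def WellLaid1 (k : ℕ) (x : List Bool → Pt) : Prop :=
  ∀ s : List Bool, 1 ≤ s.length → s.length ≤ k →
    x s ∈ convexHull ℝ ({prev1 k x s, x (firstStr k s), x (lastStr k s)} : Set Pt) ∧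
    x s ∈ convexHull ℝ ({x (firstStr k s), x (lastStr k s), next1 k x s} : Set Pt)

/-- `X_u` for a type-1 labeling: the labels of the proper descendants of `s`. -/
def descSet1 (k : ℕ) (x : List Bool → Pt) (s : List Bool) : Set Pt :=
  x '' {t | ValidNode1 k t ∧ s <+: t ∧ s ≠ t}

/-- `X̄_u = X_u ∪ {x_u}` for a type-1 labeling. -/
def barSet1 (k : ℕ) (x : List Bool → Pt) (s : List Bool) : Set Pt :=
  insert (x s) (descSet1 k x s)

/-- A type-1 labeling is an internal separation. -/
def InternalSep1 (k : ℕ) (X : Set Pt) (x : List Bool → Pt) : Prop :=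
  ∀ s : List Bool, s.length + 1 ≤ k →
    ∀ y ∈ X \ descSet1 k x s,
      ∀ a ∈ barSet1 k x (s ++ [false]), ∀ b ∈ barSet1 k x (s ++ [true]),
        0 < orient a b y

/-- A type-1 labeling is an external separation. -/
def ExternalSep1 (k : ℕ) (X : Set Pt) (x : List Bool → Pt) : Prop :=
  ∀ s : List Bool, 1 ≤ s.length → s.length + 1 ≤ k →
    ∀ y ∈ X \ barSet1 k x s,
      (∀ a ∈ barSet1 k x (s ++ [false]), 0 < orient a (x s) y) ∧
      (∀ b ∈ barSet1 k x (s ++ [true]), 0 < orient (x s) b y)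

/-- Nodes of the tree `T₂(k)`: the root `none`, and pairs `(c, s)`. -/
abbrev Node2 : Type := Option (Fin 3 × List Bool)

/-- Valid nodes of `T₂(k)`: the root, and pairs `(c, s)` with `|s| ≤ k - 2`. -/
def ValidNode2 (k : ℕ) : Node2 → Prop
  | none => True
  | some (_, s) => s.length + 2 ≤ k

/-- A type-2 labeling of `X`, given by its label function `x` (the inverse of `ψ`). -/
def IsLabeling2 (k : ℕ) (X : Set Pt) (x : Node2 → Pt) : Prop :=
  Set.InjOn x {u | ValidNode2 k u} ∧ x '' {u | ValidNode2 k u} = X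

/-- The `i`-th node (left-to-right) of the `(j+2)`-level of `T₂(k)`. -/
def node2At (j i : ℕ) : Node2 :=
  some (⟨i / 2 ^ j % 3, by omega⟩, strOfNat j (i % 2 ^ j))

/-- A type-2 labeling is nested. -/
def Nested2 (k : ℕ) (X : Set Pt) (x : Node2 → Pt) : Prop :=
  CCWEnum (layer X k 1) (fun _ : Fin 1 => x none) ∧
  ∀ j : ℕ, j + 2 ≤ k →
    CCWEnum (layer X k (j + 2)) fun i : Fin (3 * 2 ^ j) => x (node2At j i.val)

/-- A type-2 labeling is adoptable. -/
def Adoptable2 (k : ℕ) (X : Set Pt) (x : Node2 → Pt) : Prop :=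
  ∀ (c : Fin 3) (s : List Bool), s.length + 3 ≤ k →
    AdoptablePair (layer X k (s.length + 3)) (x (some (c, s)))
      (x (some (c, s ++ [false]))) (x (some (c, s ++ [true])))

/-- `previous[R_k(u)]` for a type-2 labeling, `u = (c, s)`. -/
def prev2 (k : ℕ) (x : Node2 → Pt) (c : Fin 3) (s : List Bool) : Pt :=
  x (node2At (k - 2)
      ((c.val * 2 ^ (k - 2) + natOfStr (firstStr (k - 2) s) + (3 * 2 ^ (k - 2) - 1)) %
        (3 * 2 ^ (k - 2))))

/-- `next[R_k(u)]` for a type-2 labeling, `u = (c, s)`. -/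
def next2 (k : ℕ) (x : Node2 → Pt) (c : Fin 3) (s : List Bool) : Pt :=
  x (node2At (k - 2)
      ((c.val * 2 ^ (k - 2) + natOfStr (lastStr (k - 2) s) + 1) % (3 * 2 ^ (k - 2))))

/-- A type-2 labeling is well laid (the root is the only node with `R_k(u) = R_k`). -/
def WellLaid2 (k : ℕ) (x : Node2 → Pt) : Prop :=
  ∀ (c : Fin 3) (s : List Bool), s.length + 2 ≤ k →
    x (some (c, s)) ∈ convexHull ℝ
      ({prev2 k x c s, x (some (c, firstStr (k - 2) s)),
        x (some (c, lastStr (k - 2) s))} : Set Pt) ∧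
    x (some (c, s)) ∈ convexHull ℝ
      ({x (some (c, firstStr (k - 2) s)), x (some (c, lastStr (k - 2) s)),
        next2 k x c s} : Set Pt)

/-- `X_u` for a type-2 labeling and a non-root node `u = (c, s)`. -/
def descSet2 (k : ℕ) (x : Node2 → Pt) (c : Fin 3) (s : List Bool) : Set Pt :=
  x '' {u | ∃ t : List Bool, u = some (c, t) ∧ t.length + 2 ≤ k ∧ s <+: t ∧ s ≠ t}

/-- `X̄_u = X_u ∪ {x_u}` for a type-2 labeling and a non-root node `u = (c, s)`. -/
def barSet2 (k : ℕ) (x : Node2 → Pt) (c : Fin 3) (s : List Bool) : Set Pt :=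
  insert (x (some (c, s))) (descSet2 k x c s)

/-- A type-2 labeling is an internal separation. -/
def InternalSep2 (k : ℕ) (X : Set Pt) (x : Node2 → Pt) : Prop :=
  (∀ (c : Fin 3) (s : List Bool), s.length + 3 ≤ k →
    ∀ y ∈ X \ descSet2 k x c s,
      ∀ a ∈ barSet2 k x c (s ++ [false]), ∀ b ∈ barSet2 k x c (s ++ [true]),
        0 < orient a b y) ∧
  (∀ i : Fin 3,
    ∀ y ∈ X \ (barSet2 k x i [] ∪ barSet2 k x (i + 1) []),
      ∀ a ∈ barSet2 k x i [], ∀ b ∈ barSet2 k x (i + 1) [],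
        0 < orient a b y)

/-- A type-2 labeling is an external separation. -/
def ExternalSep2 (k : ℕ) (X : Set Pt) (x : Node2 → Pt) : Prop :=
  ∀ (c : Fin 3) (s : List Bool), s.length + 3 ≤ k →
    ∀ y ∈ X \ barSet2 k x c s,
      (∀ a ∈ barSet2 k x c (s ++ [false]), 0 < orient a (x (some (c, s))) y) ∧
      (∀ b ∈ barSet2 k x c (s ++ [true]), 0 < orient (x (some (c, s))) b y)

/-- One corner-refinement step: from `α_s = (q, o, p)` to `α_{s0}` (for `b = false`)
or `α_{s1}` (for `b = true`). -/
def cornerStep (α : Pt × Pt × Pt) (b : Bool) : Pt × Pt × Pt :=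
  let q := α.1
  let o := α.2.1
  let p := α.2.2
  if b then (o + (1 / 5 : ℝ) • (q - o), o + (1 / 5 : ℝ) • (p - o), o + (2 / 5 : ℝ) • (p - o))
  else (o + (2 / 5 : ℝ) • (q - o), o + (1 / 5 : ℝ) • (q - o), o + (1 / 5 : ℝ) • (p - o))

/-- The corner `α_s = (q_s, o_s, p_s)` assigned to the binary string `s` (with parameter `k`). -/
def corner (k : ℕ) (s : List Bool) : Pt × Pt × Pt :=
  s.foldl cornerStep
    (((0 : ℝ), (2 * 5 ^ (k + 1) : ℝ)), ((0 : ℝ), (0 : ℝ)), ((2 * 5 ^ (k + 1) : ℝ), (0 : ℝ)))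

/-- The point `y_v` for a binary string `v = s ++ [b]` of positive length. -/
def ypt (k : ℕ) (v : List Bool) : Pt :=
  let α := corner k v.dropLast
  if v.getLastD false then α.2.1 + (1 / 5 : ℝ) • (α.2.2 - α.2.1)
  else α.2.1 + (1 / 5 : ℝ) • (α.1 - α.2.1)

/-- The point `x_s`: the midpoint of `y_{s·0^(k+1−|s|)}` and `y_{s·1^(k+1−|s|)}`. -/
def xpt (k : ℕ) (s : List Bool) : Pt :=
  (1 / 2 : ℝ) •
    (ypt k (s ++ List.replicate (k + 1 - s.length) false) +
      ypt k (s ++ List.replicate (k + 1 - s.length) true))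

/-!
Let `E` be the set of vertices of `conv X` and `r = |E|`. Sorting by angle around the vertex
`q 0` that minimises a generic linear functional lists `E` counterclockwise as `q 0, …, q (r-1)`.
The fan triangles `q 0, q i, q (i+1)` (`1 ≤ i ≤ r - 2`) have pairwise disjoint interiors, and by
general position their interiors cover `X \ E`. The nested almost convex condition on the outer
layer puts exactly one point of `X \ E` in each of them, so `n - r = r - 2`.
-/

lemma orient_rotate (a b c : Pt) : orient a b c = orient b c a := by unfold orient; ring

lemma orient_swap (a b c : Pt) : orient a c b = -orient a b c := by unfold orient; ring

@[simp] lemma orient_self_self (a b : Pt) : orient a a b = 0 := by unfold orient; ring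

@[simp] lemma orient_self_fst (a b : Pt) : orient a b a = 0 := by unfold orient; ring

@[simp] lemma orient_self_snd (a b : Pt) : orient a b b = 0 := by unfold orient; ring

lemma orient_add_orient_add_orient (a b c q : Pt) :
    orient a b q + orient b c q + orient c a q = orient a b c := by unfold orient; ring

lemma orient_barycentric (a b c q : Pt) :
    orient b c q • a + orient c a q • b + orient a b q • c = orient a b c • q := by
  ext <;> simp only [orient, Prod.fst_add, Prod.snd_add, Prod.smul_fst, Prod.smul_snd,
    smul_eq_mul] <;> ring

lemma orient_smul_add_smul (a b x y : Pt) {s t : ℝ} (h : s + t = 1) :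
    orient a b (s • x + t • y) = s * orient a b x + t * orient a b y := by
  obtain rfl : t = 1 - s := by linarith
  simp only [orient, Prod.fst_add, Prod.snd_add, Prod.smul_fst, Prod.smul_snd, smul_eq_mul]
  ring

lemma convex_setOf_orient_nonneg (a b : Pt) : Convex ℝ {z | 0 ≤ orient a b z} := by
  intro x hx y hy s t hs ht hst
  simp only [mem_ofPred_eq, orient_smul_add_smul a b x y hst] at *
  positivity

lemma orient_nonneg_of_mem_convexHull {S : Set Pt} {a b q : Pt}
    (hS : ∀ z ∈ S, 0 ≤ orient a b z) (hq : q ∈ convexHull ℝ S) : 0 ≤ orient a b q :=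
  convexHull_min hS (convex_setOf_orient_nonneg a b) hq

/-- `orient a b` is a nonconstant affine function, hence an open map. -/
lemma orient_pos_of_mem_interior {S : Set Pt} {a b c q : Pt} (habc : orient a b c ≠ 0)
    (hS : ∀ z ∈ S, 0 ≤ orient a b z) (hq : q ∈ interior S) : 0 < orient a b q := by
  set L : StrongDual ℝ Pt :=
    (b.1 - a.1) • ContinuousLinearMap.snd ℝ ℝ ℝ - (b.2 - a.2) • ContinuousLinearMap.fst ℝ ℝ ℝ
  have hL : ∀ z, orient a b z = L z - L a := fun z => by
    simp only [L, orient, sub_apply, smul_apply,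
      ContinuousLinearMap.coe_snd', ContinuousLinearMap.coe_fst', smul_eq_mul]
    ring
  have hL0 : L ≠ 0 := fun h => habc (by simp [hL, h])
  have hsub : S ⊆ L ⁻¹' Ici (L a) := fun z hz => by simpa [hL] using hS z hz
  have := interior_mono hsub hq
  rw [← (L.isOpenMap_of_ne_zero hL0).preimage_interior_eq_interior_preimage L.continuous,
    interior_Ici] at this
  simpa [hL] using this

lemma continuous_orient (a b : Pt) : Continuous (orient a b) := by
  unfold orient; fun_prop

lemma mem_convexHull_triangle_of_orient_pos {a b c q : Pt} (h₁ : 0 < orient a b q)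
    (h₂ : 0 < orient b c q) (h₃ : 0 < orient c a q) : q ∈ convexHull ℝ {a, b, c} := by
  have hsum := orient_add_orient_add_orient a b c q
  have ho : 0 < orient a b c := by linarith
  set w : Fin 3 → ℝ := fun i => ![orient b c q, orient c a q, orient a b q] i / orient a b c
  have hq : q = ∑ i, w i • ![a, b, c] i := by
    simp only [w, Fin.sum_univ_three, div_eq_inv_mul, mul_smul, ← smul_add]
    simp [orient_barycentric, ho.ne']
  rw [hq]
  refine (convex_convexHull ℝ _).sum_mem (fun i _ => div_nonneg ?_ ho.le) ?_
    (fun i _ => subset_convexHull ℝ _ ?_)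
  · fin_cases i <;> simp [h₁.le, h₂.le, h₃.le]
  · simp only [w, Fin.sum_univ_three]
    field_simp
    simpa [add_comm, add_left_comm] using hsum
  · fin_cases i <;> simp

lemma mem_interior_convexHull_triangle_iff {a b c q : Pt} (habc : 0 < orient a b c) :
    q ∈ interior (convexHull ℝ {a, b, c}) ↔
      0 < orient a b q ∧ 0 < orient b c q ∧ 0 < orient c a q := by
  constructor
  · intro hq
    have hbca : 0 < orient b c a := orient_rotate a b c ▸ habc
    have hcab : 0 < orient c a b := orient_rotate b c a ▸ hbca
    refine ⟨orient_pos_of_mem_interior habc.ne' ?_ hq,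
      orient_pos_of_mem_interior hbca.ne' ?_ hq, orient_pos_of_mem_interior hcab.ne' ?_ hq⟩ <;>
    · refine fun z hz => orient_nonneg_of_mem_convexHull ?_ hz
      rintro z (rfl | rfl | rfl) <;> simp [hbca.le, hcab.le, habc.le]
  · intro hq
    let U : Set Pt := {z | 0 < orient a b z ∧ 0 < orient b c z ∧ 0 < orient c a z}
    refine interior_maximal (t := U) (s := convexHull ℝ {a, b, c})
      (fun z (hz : z ∈ U) => mem_convexHull_triangle_of_orient_pos hz.1 hz.2.1 hz.2.2) ?_ hq
    exact (isOpen_lt continuous_const (continuous_orient a b)).inter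
      ((isOpen_lt continuous_const (continuous_orient b c)).inter
        (isOpen_lt continuous_const (continuous_orient c a)))

lemma extremePts_subset (S : Set Pt) : extremePts S ⊆ S := extremePoints_convexHull_subset

lemma extremePts_nonempty {S : Set Pt} (hS : S.Finite) (hne : S.Nonempty) :
    (extremePts S).Nonempty :=
  (hS.isCompact_convexHull (𝕜 := ℝ)).extremePoints_nonempty (hne.mono (subset_convexHull ℝ S))

lemma convexHull_extremePts {S : Set Pt} (hS : S.Finite) :
    convexHull ℝ (extremePts S) = convexHull ℝ S := by
  have hE : (extremePts S).Finite := hS.subset (extremePts_subset S)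
  rw [← (hE.isClosed_convexHull (𝕜 := ℝ)).closure_eq]
  exact closure_convexHull_extremePoints (hS.isCompact_convexHull (𝕜 := ℝ)) (convex_convexHull ℝ S)

lemma notMem_extremePts_of_orient_pos {S : Set Pt} {a b c x : Pt} (ha : a ∈ S) (hb : b ∈ S)
    (hc : c ∈ S) (h₁ : 0 < orient a b x) (h₂ : 0 < orient b c x) (h₃ : 0 < orient c a x) :
    x ∉ extremePts S := by
  intro hx
  have hsub : convexHull ℝ {a, b, c} ⊆ convexHull ℝ S :=
    convexHull_mono (by simp [insert_subset_iff, ha, hb, hc])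
  have := extremePoints_convexHull_subset <| inter_extremePoints_subset_extremePoints_of_subset
    hsub ⟨mem_convexHull_triangle_of_orient_pos h₁ h₂ h₃, hx⟩
  rcases this with rfl | rfl | rfl <;> simp_all

lemma orient_pos_of_forall_extremePts {X : Set Pt} (hX : X.Finite) (hgp : GenPos X)
    {a b x : Pt} (ha : a ∈ X) (hb : b ∈ X) (hab : a ≠ b)
    (hE : ∀ z ∈ extremePts X, 0 ≤ orient a b z) (hx : x ∈ X) (hxa : x ≠ a) (hxb : x ≠ b) :
    0 < orient a b x := by
  have hx' : x ∈ convexHull ℝ (extremePts X) := by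
    rw [convexHull_extremePts hX]; exact subset_convexHull ℝ X hx
  exact (orient_nonneg_of_mem_convexHull hE hx').lt_of_ne
    (hgp a ha b hb x hx hab hxa.symm hxb.symm).symm

lemma exists_injOn_fst_add_mul_snd {X : Set Pt} (hX : X.Finite) :
    ∃ ε : ℝ, InjOn (fun q : Pt => q.1 + ε * q.2) X := by
  obtain ⟨ε, hε⟩ := ((hX.prod hX).image fun uv : Pt × Pt =>
    (uv.2.1 - uv.1.1) / (uv.1.2 - uv.2.2)).exists_notMem
  refine ⟨ε, fun u hu v hv huv => ?_⟩
  dsimp only at huv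
  by_cases h : u.2 = v.2
  · exact Prod.ext (by rw [h] at huv; linarith) h
  · refine absurd ⟨(u, v), ⟨hu, hv⟩, ?_⟩ hε
    field_simp [sub_ne_zero.2 h]
    linarith

lemma exists_mem_extremePts_forall_lt {X : Set Pt} (hX : X.Finite) (hne : X.Nonempty) {ε : ℝ}
    (hε : InjOn (fun q : Pt => q.1 + ε * q.2) X) :
    ∃ p₀ ∈ extremePts X, ∀ x ∈ X, x ≠ p₀ → p₀.1 + ε * p₀.2 < x.1 + ε * x.2 := by
  obtain ⟨p₀, hp₀, hmin⟩ := exists_min_image (extremePts X) (fun q : Pt => q.1 + ε * q.2)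
    (hX.subset (extremePts_subset X)) (extremePts_nonempty hX hne)
  refine ⟨p₀, hp₀, fun x hx hxp₀ => lt_of_le_of_ne ?_ fun h => hxp₀ (hε hx
    (extremePts_subset X hp₀) h.symm)⟩
  have hlin : IsLinearMap ℝ fun q : Pt => q.1 + ε * q.2 :=
    ⟨fun x y => by simp only [Prod.fst_add, Prod.snd_add]; ring,
      fun c x => by simp only [Prod.smul_fst, Prod.smul_snd, smul_eq_mul]; ring⟩
  refine convexHull_min hmin (convex_halfSpace_ge hlin _) ?_
  rw [convexHull_extremePts hX]
  exact subset_convexHull ℝ X hx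

/-- Measured from the direction `(1, ε)`, a strictly increasing function of the polar angle of
`q - p₀` on the open half-plane where the denominator is positive. -/
def polarKey (ε : ℝ) (p₀ q : Pt) : ℝ :=
  ((q.2 - p₀.2) - ε * (q.1 - p₀.1)) / ((q.1 - p₀.1) + ε * (q.2 - p₀.2))

lemma orient_pos_iff_polarKey_lt {ε : ℝ} {p₀ a b : Pt}
    (ha : 0 < (a.1 - p₀.1) + ε * (a.2 - p₀.2)) (hb : 0 < (b.1 - p₀.1) + ε * (b.2 - p₀.2)) :
    0 < orient p₀ a b ↔ polarKey ε p₀ a < polarKey ε p₀ b := by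
  have hid : ((b.2 - p₀.2) - ε * (b.1 - p₀.1)) * ((a.1 - p₀.1) + ε * (a.2 - p₀.2)) -
      ((a.2 - p₀.2) - ε * (a.1 - p₀.1)) * ((b.1 - p₀.1) + ε * (b.2 - p₀.2)) =
      (1 + ε ^ 2) * orient p₀ a b := by
    unfold orient; ring
  rw [polarKey, polarKey, div_lt_div_iff₀ ha hb]
  conv_rhs => rw [← sub_pos, hid]
  exact (mul_pos_iff_of_pos_left (by positivity)).symm

lemma exists_range_eq_strictMono_comp {α β : Type*} [LinearOrder β] {S : Set α} (hS : S.Finite)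
    {f : α → β} (hf : InjOn f S) {n : ℕ} (hn : S.ncard = n) :
    ∃ p : Fin n → α, range p = S ∧ StrictMono (f ∘ p) := by
  classical
  set T := hS.toFinset.image f
  have hT : T.card = n := by
    rw [Finset.card_image_of_injOn (by simpa using hf), ← Set.ncard_eq_toFinset_card _ hS, hn]
  set e := T.orderEmbOfFin hT
  have he : ∀ i, ∃ a ∈ S, f a = e i := fun i => by
    simpa only [T, Finset.mem_image, Finite.mem_toFinset] using T.orderEmbOfFin_mem hT i
  choose p hpS hpe using he
  refine ⟨p, Subset.antisymm (range_subset_iff.2 hpS) fun x hx => ?_, fun i j hij => ?_⟩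
  · obtain ⟨i, hi⟩ : f x ∈ range e := by
      rw [Finset.range_orderEmbOfFin]
      simpa [T] using ⟨x, hx, rfl⟩
    exact ⟨i, hf (hpS i) hx (by rw [hpe, hi])⟩
  · simpa only [Function.comp_apply, hpe] using e.strictMono hij

lemma orient_pos_of_mem_extremePts {X : Set Pt} (hgp : GenPos X) {p₀ a b c : Pt} (hp₀ : p₀ ∈ X)
    (ha : a ∈ X) (hb : b ∈ extremePts X) (hc : c ∈ X) (h₁ : 0 < orient p₀ a b)
    (h₂ : 0 < orient p₀ b c) : 0 < orient a b c := by
  have hab : a ≠ b := by rintro rfl; simp at h₁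
  have hbc : b ≠ c := by rintro rfl; simp at h₂
  have hac : a ≠ c := by rintro rfl; rw [orient_swap] at h₂; linarith
  -- if `a b c` turned right, `b` would lie inside the triangle `p₀ a c`
  refine lt_of_le_of_ne (not_lt.1 fun h => notMem_extremePts_of_orient_pos hp₀ ha hc h₁ ?_ ?_ hb)
    (hgp a ha b (extremePts_subset X hb) c hc hab hac hbc).symm
  · rw [orient_swap]; linarith
  · rwa [← orient_rotate, ← orient_rotate]

lemma ccwEnum_cons {X : Set Pt} (hgp : GenPos X) {p₀ : Pt} {n : ℕ} {p : Fin n → Pt}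
    (hp₀ : p₀ ∈ extremePts X) (hp : range p = extremePts X \ {p₀})
    (hfan : ∀ i j, i < j → 0 < orient p₀ (p i) (p j)) :
    CCWEnum (extremePts X) (Fin.cons p₀ p : Fin (n + 1) → Pt) := by
  have hpE : ∀ i, p i ∈ extremePts X := fun i => (hp.subset (mem_range_self i)).1
  have hpinj : Function.Injective p := by
    intro i j hij
    by_contra hne
    rcases lt_or_gt_of_ne hne with h | h
    · simpa [hij] using hfan i j h
    · simpa [hij] using hfan j i h
  refine ⟨Fin.cons_injective_iff.2 ⟨by simp [hp], hpinj⟩, by rw [Fin.range_cons, hp]; simp [hp₀],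
    fun a b c hab hbc => ?_⟩
  obtain ⟨b, rfl⟩ := Fin.exists_succ_eq.2 (ne_of_gt (lt_of_le_of_lt (Fin.zero_le a) hab))
  obtain ⟨c, rfl⟩ := Fin.exists_succ_eq.2 (ne_of_gt (lt_trans (Fin.succ_pos b) hbc))
  rw [Fin.succ_lt_succ_iff] at hbc
  rcases Fin.eq_zero_or_eq_succ a with rfl | ⟨a, rfl⟩
  · simpa using hfan b c hbc
  · rw [Fin.succ_lt_succ_iff] at hab
    simpa using orient_pos_of_mem_extremePts hgp (extremePts_subset X hp₀)
      (extremePts_subset X (hpE a)) (hpE b) (extremePts_subset X (hpE c)) (hfan a b hab)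
      (hfan b c hbc)

lemma exists_ccwEnum_extremePts {X : Set Pt} (hX : X.Finite) (hgp : GenPos X) {n : ℕ}
    (hn : (extremePts X).ncard = n + 1) : ∃ q : Fin (n + 1) → Pt, CCWEnum (extremePts X) q := by
  have hne : X.Nonempty := (nonempty_of_ncard_ne_zero (by omega)).mono (extremePts_subset X)
  obtain ⟨ε, hε⟩ := exists_injOn_fst_add_mul_snd hX
  obtain ⟨p₀, hp₀, hmin⟩ := exists_mem_extremePts_forall_lt hX hne hε
  have hkey : ∀ a ∈ X, a ≠ p₀ → ∀ b ∈ X, b ≠ p₀ →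
      (0 < orient p₀ a b ↔ polarKey ε p₀ a < polarKey ε p₀ b) := fun a ha ha₀ b hb hb₀ =>
    orient_pos_iff_polarKey_lt (by linarith [hmin a ha ha₀]) (by linarith [hmin b hb hb₀])
  have hE' : ∀ x ∈ extremePts X \ {p₀}, x ∈ X ∧ x ≠ p₀ := fun x hx =>
    ⟨extremePts_subset X hx.1, hx.2⟩
  have hinj : InjOn (polarKey ε p₀) (extremePts X \ {p₀}) := by
    intro a ha b hb hab
    by_contra hne
    obtain ⟨ha, ha₀⟩ := hE' a ha
    obtain ⟨hb, hb₀⟩ := hE' b hb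
    rcases (hgp p₀ (extremePts_subset X hp₀) a ha b hb (Ne.symm ha₀) (Ne.symm hb₀) hne).lt_or_gt
      with h | h
    · rw [← neg_pos, ← orient_swap, hkey b hb hb₀ a ha ha₀] at h
      exact h.ne' hab
    · exact ((hkey a ha ha₀ b hb hb₀).1 h).ne hab
  obtain ⟨p, hp, hmono⟩ := exists_range_eq_strictMono_comp
    ((hX.subset (extremePts_subset X)).sdiff) hinj (n := n)
    (by rw [ncard_sdiff_singleton_of_mem hp₀]; omega)
  refine ⟨_, ccwEnum_cons hgp hp₀ hp fun i j hij => ?_⟩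
  obtain ⟨hi, hi₀⟩ := hE' (p i) (hp ▸ mem_range_self i)
  obtain ⟨hj, hj₀⟩ := hE' (p j) (hp ▸ mem_range_self j)
  exact (hkey _ hi hi₀ _ hj hj₀).2 (hmono hij)

lemma ncard_eq_card_of_existsUnique {α ι : Type*} [Fintype ι] {I : Set α} {S : ι → Set α}
    (h₁ : ∀ x ∈ I, ∃! i, x ∈ S i) (h₂ : ∀ i, ∃! x, x ∈ I ∩ S i) : I.ncard = Fintype.card ι := by
  choose F hF hFu using h₂
  have hbij : BijOn F univ I :=
    ⟨fun i _ => (hF i).1, fun i _ j _ hij => (h₁ _ (hF i).1).unique (hF i).2 (hij ▸ (hF j).2),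
      fun x hx => let ⟨i, hi, _⟩ := h₁ x hx; ⟨i, trivial, (hFu i x ⟨hx, hi⟩).symm⟩⟩
  rw [← hbij.ncard_eq, ncard_univ, Nat.card_eq_fintype_card]

section CCWEnum

variable {S : Set Pt} {n : ℕ}

lemma CCWEnum.mem {q : Fin n → Pt} (hq : CCWEnum S q) (c : Fin n) : q c ∈ S :=
  hq.2.1 ▸ mem_range_self c

lemma CCWEnum.orient_nonneg {q : Fin n → Pt} (hq : CCWEnum S q) {a b c : Fin n} (hab : a < b)
    (hbc : b ≤ c) : 0 ≤ orient (q a) (q b) (q c) := by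
  rcases hbc.eq_or_lt with rfl | hbc
  · simp
  · exact (hq.2.2 a b c hab hbc).le

lemma CCWEnum.orient_castSucc_succ_nonneg {q : Fin (n + 1) → Pt} (hq : CCWEnum S q) (k : Fin n)
    (c : Fin (n + 1)) : 0 ≤ orient (q k.castSucc) (q k.succ) (q c) := by
  rcases lt_or_ge c k.castSucc with h | h
  · rw [← orient_rotate]
    exact (hq.2.2 _ _ _ h (Fin.castSucc_lt_succ (i := k))).le
  · rcases h.eq_or_lt with rfl | h
    · simp
    · exact hq.orient_nonneg (Fin.castSucc_lt_succ (i := k)) (Fin.castSucc_lt_iff_succ_le.1 h)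

lemma CCWEnum.orient_last_zero_nonneg {q : Fin (n + 1) → Pt} (hq : CCWEnum S q)
    (c : Fin (n + 1)) : 0 ≤ orient (q (Fin.last n)) (q 0) (q c) := by
  rcases eq_or_ne c 0 with rfl | h₀
  · simp
  rcases eq_or_ne c (Fin.last n) with rfl | hl
  · simp
  rw [orient_rotate]
  exact (hq.2.2 _ _ _ (Fin.pos_iff_ne_zero.2 h₀) (Fin.lt_last_iff_ne_last.2 hl)).le

end CCWEnum

def fanTriangle {m : ℕ} (q : Fin (m + 2) → Pt) (i : Fin m) : Set Pt :=
  convexHull ℝ {q 0, q i.succ.castSucc, q i.succ.succ}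

section Fan

variable {X : Set Pt} {m : ℕ} {q : Fin (m + 2) → Pt}

lemma CCWEnum.orient_fanTriangle_pos {S : Set Pt} (hq : CCWEnum S q) (i : Fin m) :
    0 < orient (q 0) (q i.succ.castSucc) (q i.succ.succ) :=
  hq.2.2 _ _ _ (by simp [Fin.lt_def]) Fin.castSucc_lt_succ

lemma orient_pos_of_ccwEnum_extremePts (hX : X.Finite) (hgp : GenPos X)
    (hq : CCWEnum (extremePts X) q) {a b : Fin (m + 2)} (hab : a ≠ b)
    (hE : ∀ c, 0 ≤ orient (q a) (q b) (q c)) {x : Pt} (hx : x ∈ X \ extremePts X) :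
    0 < orient (q a) (q b) x := by
  refine orient_pos_of_forall_extremePts hX hgp (extremePts_subset X (hq.mem a))
    (extremePts_subset X (hq.mem b)) (hq.1.ne hab) ?_ hx.1 (fun h => hx.2 (h ▸ hq.mem a))
    (fun h => hx.2 (h ▸ hq.mem b))
  rw [← hq.2.1]
  rintro _ ⟨c, rfl⟩
  exact hE c

lemma exists_mem_interior_fanTriangle (hX : X.Finite) (hgp : GenPos X)
    (hq : CCWEnum (extremePts X) q) {x : Pt} (hx : x ∈ X \ extremePts X) :
    ∃ i, x ∈ interior (fanTriangle q i) := by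
  classical
  have hedge (k : Fin (m + 1)) : 0 < orient (q k.castSucc) (q k.succ) x :=
    orient_pos_of_ccwEnum_extremePts hX hgp hq (Fin.castSucc_lt_succ (i := k)).ne
      (hq.orient_castSucc_succ_nonneg k) hx
  have hP : ∃ k, ∃ h : k < m + 2, orient (q 0) (q ⟨k, h⟩) x < 0 := by
    refine ⟨m + 1, by omega, ?_⟩
    have := orient_pos_of_ccwEnum_extremePts hX hgp hq (Fin.last_pos.ne')
      hq.orient_last_zero_nonneg hx
    rw [orient_rotate, orient_swap] at this
    exact neg_pos.1 this
  -- `q (Nat.find hP)` is the first vertex seen from `q 0` to the right of `x`; the fan triangle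
  -- just before it contains `x`.
  obtain ⟨hk, hneg⟩ := Nat.find_spec hP
  have hk₀ : Nat.find hP ≠ 0 := fun h => by simp [h] at hneg
  have hk₁ : Nat.find hP ≠ 1 := fun h => by
    simp only [h] at hneg
    exact hneg.not_gt (hedge 0)
  obtain ⟨i, hi⟩ : ∃ i, Nat.find hP = i + 2 := ⟨Nat.find hP - 2, by omega⟩
  set i' : Fin m := ⟨i, by omega⟩
  have hprev := Nat.find_min hP (show i + 1 < Nat.find hP by omega)
  have hqk : q ⟨Nat.find hP, hk⟩ = q i'.succ.succ := congrArg q (Fin.ext hi)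
  refine ⟨i', (mem_interior_convexHull_triangle_iff (hq.orient_fanTriangle_pos i')).2
    ⟨?_, hedge i'.succ, ?_⟩⟩
  · refine lt_of_le_of_ne (not_lt.1 fun h => hprev ⟨by omega, h⟩) (Ne.symm ?_)
    exact hgp _ (extremePts_subset X (hq.mem _)) _ (extremePts_subset X (hq.mem _)) x hx.1
      (hq.1.ne (Fin.castSucc_pos (Fin.succ_pos _)).ne) (fun h => hx.2 (h ▸ hq.mem _))
      (fun h => hx.2 (h ▸ hq.mem _))
  · rw [orient_rotate, orient_swap, neg_pos, ← hqk]
    exact hneg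

lemma notMem_interior_fanTriangle_of_lt {S : Set Pt} (hq : CCWEnum S q) {i j : Fin m}
    (hij : i < j) {x : Pt} (hi : x ∈ interior (fanTriangle q i)) :
    x ∉ interior (fanTriangle q j) := by
  intro hj
  rw [fanTriangle] at hj
  have h₃ := ((mem_interior_convexHull_triangle_iff (hq.orient_fanTriangle_pos i)).1 hi).2.2
  rw [orient_rotate, orient_swap, neg_pos] at h₃
  refine h₃.not_ge (orient_nonneg_of_mem_convexHull ?_ (interior_subset hj))
  rintro z (rfl | rfl | rfl)
  · simp
  · exact hq.orient_nonneg (Fin.succ_pos _)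
      (Fin.le_def.2 (by simp only [Fin.val_succ, Fin.val_castSucc]; omega))
  · exact hq.orient_nonneg (Fin.succ_pos _) (Fin.succ_le_succ_iff.2 (Fin.succ_le_succ_iff.2 hij.le))

end Fan

lemma ncard_diff_extremePts_of_ccwEnum {X : Set Pt} (hX : X.Finite) (hgp : GenPos X) {m : ℕ}
    {q : Fin (m + 2) → Pt} (hq : CCWEnum (extremePts X) q)
    (huniq : ∀ a ∈ extremePts X, ∀ b ∈ extremePts X, ∀ c ∈ extremePts X, a ≠ b → a ≠ c → b ≠ c →
      ∃! p, p ∈ (X \ extremePts X) ∩ interior (convexHull ℝ {a, b, c})) :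
    (X \ extremePts X).ncard = m := by
  rw [← Fintype.card_fin m]
  refine ncard_eq_card_of_existsUnique (S := fun i => interior (fanTriangle q i))
    (fun x hx => ?_) fun i => ?_
  · obtain ⟨i, hi⟩ := exists_mem_interior_fanTriangle hX hgp hq hx
    refine ⟨i, hi, fun j hj => ?_⟩
    rcases lt_trichotomy j i with h | rfl | h
    · exact absurd hi (notMem_interior_fanTriangle_of_lt hq h hj)
    · rfl
    · exact absurd hj (notMem_interior_fanTriangle_of_lt hq h hi)
  · refine huniq _ (hq.mem _) _ (hq.mem _) _ (hq.mem _) (hq.1.ne ?_) (hq.1.ne ?_) (hq.1.ne ?_) <;>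
      simp [Fin.ext_iff]

lemma exists_peel_iterate_eq_empty {S : Set Pt} (hS : S.Finite) : ∃ k, peel^[k] S = ∅ := by
  rcases S.eq_empty_or_nonempty with rfl | hne
  · exact ⟨0, rfl⟩
  · obtain ⟨x, hx⟩ := extremePts_nonempty hS hne
    have : (peel S).ncard < S.ncard :=
      ncard_lt_ncard (ssubset_of_subset_not_subset sdiff_subset
        fun h => (h (extremePts_subset S hx)).2 hx) hS
    obtain ⟨k, hk⟩ := exists_peel_iterate_eq_empty hS.sdiff
    exact ⟨k + 1, hk⟩
termination_by S.ncard

lemma exists_hasLayers {X : Set Pt} (hX : X.Finite) : ∃ k, HasLayers X k := by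
  classical
  have h := exists_peel_iterate_eq_empty hX
  exact ⟨Nat.find h, Nat.find_spec h, fun j hj => Nat.find_min h hj⟩

lemma IsNACS.existsUnique_mem_peel {X : Set Pt} (hX : IsNACS X) :
    ∀ a ∈ extremePts X, ∀ b ∈ extremePts X, ∀ c ∈ extremePts X, a ≠ b → a ≠ c → b ≠ c →
      ∃! p, p ∈ (X \ extremePts X) ∩ interior (convexHull ℝ {a, b, c}) := by
  obtain ⟨hfin, hne, -, h⟩ := hX
  obtain ⟨k, hk⟩ := exists_hasLayers hfin
  have hk₁ : 1 ≤ k := Nat.one_le_iff_ne_zero.2 fun h₀ => hne.ne_empty (by simpa [h₀] using hk.1)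
  simpa [layer, layerSub, Nat.sub_sub_self hk₁, peel] using h k hk k hk₁ le_rfl

lemma two_le_ncard_extremePts {X : Set Pt} (hX : X.Finite) (h : 2 ≤ X.ncard) :
    2 ≤ (extremePts X).ncard := by
  by_contra! hE
  have hXE : X ⊆ convexHull ℝ (extremePts X) := convexHull_extremePts hX ▸ subset_convexHull ℝ X
  rcases (ncard_le_one_iff_eq (hX.subset (extremePts_subset X))).1 (by omega) with h₀ | ⟨a, ha⟩
  · rw [h₀, convexHull_empty, subset_empty_iff] at hXE
    simp [hXE] at h
  · rw [ha, convexHull_singleton] at hXE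
    have := ncard_le_ncard hXE
    simp only [ncard_singleton] at this
    omega

/-- A nested almost convex set with `n ≥ 2` points has even cardinality and
exactly `(n+2)/2` extreme points; in particular it has more than `n/2` points in convex
position. -/
theorem nacs_hull_size (X : Set Pt) (hX : IsNACS X) (n : ℕ) (hn : n = X.ncard) (h2 : 2 ≤ n) :
    Even n ∧ (extremePts X).ncard = (n + 2) / 2 ∧ n / 2 < (extremePts X).ncard := by
  have huniq := hX.existsUnique_mem_peel
  obtain ⟨hfin, -, hgp, -⟩ := hX
  obtain ⟨m, hm⟩ : ∃ m, (extremePts X).ncard = m + 2 :=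
    ⟨_, (Nat.sub_add_cancel (two_le_ncard_extremePts hfin (hn ▸ h2))).symm⟩
  obtain ⟨q, hq⟩ := exists_ccwEnum_extremePts hfin hgp hm
  have hI := ncard_diff_extremePts_of_ccwEnum hfin hgp hq huniq
  have hsplit := ncard_sdiff_add_ncard_of_subset (extremePts_subset X) hfin
  exact ⟨⟨m + 1, by omega⟩, by omega, by omega⟩
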